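/- arXiv:2602.15015 — 3 statements merged into one kernel-verified Lean document; each statement's English description precedes it below -/
import Mathlib

section
/- If the A-product demand D_A(u,v) = A(u)A(v)/|A| is routable in G with congestion 1/φ, then every A-respecting demand D' (i.e., for every vertex x, the sum over y of D'(x,y) is at most A(x)) is routable in G with congestion 2/φ; that is, A is (φ/2)-flow-expanding in G. -/
open Finset

/-- `D` is routable in `G` with congestion `ρ`: there is a multicommodity flow
`f s t u v` (flow of commodity `(s,t)` on the directed edge `(u,v)`), supported on
edges of `G`, antisymmetric, conserved at internal vertices, shipping `D s t` units
from `s` to `t`, with total flow at most `ρ` on every edge. -/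
def Routable {V : Type*} [Fintype V] [DecidableEq V] (G : SimpleGraph V)
    (D : V → V → ℝ) (ρ : ℝ) : Prop :=
  ∃ f : V → V → V → V → ℝ,
    (∀ s t u v, ¬ G.Adj u v → f s t u v = 0) ∧
    (∀ s t u v, f s t u v = - f s t v u) ∧
    (∀ s t x, x ≠ s → x ≠ t → ∑ y, f s t x y = 0) ∧
    (∀ s t, s ≠ t → ∑ y, f s t s y = D s t) ∧
    (∀ u v, G.Adj u v → ∑ s, ∑ t, |f s t u v| ≤ ρ)

/-- Summing a function that vanishes at `s` over everything is summing over `erase s`. -/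
lemma sum_ite_ne_aux {V : Type*} [Fintype V] [DecidableEq V] (s : V) (g : V → ℝ) :
    ∑ w, (if w = s then 0 else g w) = ∑ w ∈ univ.erase s, g w := by
  rw [← Finset.sum_erase_add univ (fun w => if w = s then 0 else g w) (Finset.mem_univ s),
    if_pos rfl, add_zero]
  exact Finset.sum_congr rfl fun w hw => if_neg (Finset.mem_erase.1 hw).1

/-- If the `A`-product demand is routable in `G` with congestion `1/φ`, then every
`A`-respecting demand is routable with congestion `2/φ`, i.e. `A` is
`(φ/2)`-flow-expanding in `G`. -/
theorem product_demand_routable_implies_flow_expanding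
    {V : Type*} [Fintype V] [DecidableEq V] (G : SimpleGraph V)
    (A : V → ℝ) (hA : ∀ v, 0 ≤ A v) (hApos : 0 < ∑ v, A v)
    (φ : ℝ) (hφ : 0 < φ)
    (hroute : Routable G (fun u v => A u * A v / ∑ x, A x) (1 / φ))
    (D' : V → V → ℝ) (hD'nonneg : ∀ u v, 0 ≤ D' u v)
    (hD'symm : ∀ u v, D' u v = D' v u)
    (hresp : ∀ x, ∑ y ∈ univ.erase x, D' x y ≤ A x) :
    Routable G D' (2 / φ) := by
  obtain ⟨f, h0, ha, hc, hv, hcap⟩ := hroute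
  set S := ∑ v, A v with hSdef
  have hSne : S ≠ 0 := ne_of_gt hApos
  -- If A s = 0 then D' s t = 0 for t ≠ s.
  have hzero : ∀ s t, s ≠ t → A s = 0 → D' s t = 0 := by
    intro s t hst hAs
    have h1 : D' s t ≤ ∑ y ∈ univ.erase s, D' s y :=
      Finset.single_le_sum (fun y _ => hD'nonneg s y)
        (Finset.mem_erase.2 ⟨Ne.symm hst, Finset.mem_univ t⟩)
    have h2 := hresp s
    have h3 := hD'nonneg s t
    linarith
  -- Total net flow is zero (antisymmetry).
  have htot : ∀ s t, ∑ x, ∑ y, f s t x y = 0 := by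
    intro s t
    have h1 : ∑ x, ∑ y, f s t x y = ∑ x, ∑ y, -(f s t y x) :=
      Finset.sum_congr rfl fun x _ => Finset.sum_congr rfl fun y _ => ha s t x y
    have h2 : ∑ x, ∑ y, f s t y x = ∑ x, ∑ y, f s t x y := Finset.sum_comm
    simp only [Finset.sum_neg_distrib] at h1
    rw [h2] at h1
    linarith
  -- Net flow out of the sink.
  have hsink : ∀ s t, s ≠ t → ∑ y, f s t t y = -(A s * A t / S) := by
    intro s t hst
    have h1 := htot s t
    rw [← Finset.sum_erase_add _ _ (Finset.mem_univ t)] at h1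
    have h2 : ∑ x ∈ univ.erase t, ∑ y, f s t x y = A s * A t / S := by
      rw [Finset.sum_eq_single_of_mem s (Finset.mem_erase.2 ⟨hst, Finset.mem_univ s⟩)]
      · exact hv s t hst
      · intro x hx hxs
        exact hc s t x hxs (Finset.mem_erase.1 hx).1
    linarith
  -- Degenerate commodity (s,s) has zero net flow everywhere.
  have hss : ∀ s x, ∑ y, f s s x y = 0 := by
    intro s x
    by_cases hxs : x = s
    · subst hxs
      have h1 := htot x x
      rw [← Finset.sum_erase_add _ _ (Finset.mem_univ x)] at h1
      have h2 : ∑ z ∈ univ.erase x, ∑ y, f x x z y = 0 :=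
        Finset.sum_eq_zero fun z hz =>
          hc x x z (Finset.mem_erase.1 hz).1 (Finset.mem_erase.1 hz).1
      linarith
    · exact hc s s x hxs hxs
  -- Net flow of commodity (s,w) out of x ≠ s.
  have hA1 : ∀ s w x, x ≠ s → ∑ y, f s w x y = if w = x then -(A s * A x / S) else 0 := by
    intro s w x hxs
    by_cases hwx : w = x
    · subst hwx
      rw [if_pos rfl]
      exact hsink s w fun h => hxs h.symm
    · rw [if_neg hwx]
      by_cases hws : w = s
      · subst hws; exact hss w x
      · exact hc s w x hxs fun h => hwx h.symm
  -- Net flow of commodity (w,t) out of x ≠ t.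
  have hA2 : ∀ w t x, x ≠ t → ∑ y, f w t x y = if w = x then A x * A t / S else 0 := by
    intro w t x hxt
    by_cases hwx : w = x
    · subst hwx
      rw [if_pos rfl]
      exact hv w t hxt
    · rw [if_neg hwx]
      exact hc w t x (fun h => hwx h.symm) hxt
  -- Net flow of commodity (s,w) out of s.
  have hA3 : ∀ s w, ∑ y, f s w s y = if w = s then 0 else A s * A w / S := by
    intro s w
    by_cases hws : w = s
    · subst hws; rw [if_pos rfl]; exact hss w w
    · rw [if_neg hws]; exact hv s w fun h => hws h.symm
  -- The two-hop flow.
  refine ⟨fun s t u v => if s = t then 0 else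
      ∑ w, (D' s t / A s * f s w u v + D' s t / A t * f w t u v), ?_, ?_, ?_, ?_, ?_⟩
  · -- supported on edges
    intro s t u v hadj
    dsimp only
    by_cases h : s = t
    · simp [h]
    · rw [if_neg h]
      exact Finset.sum_eq_zero fun w _ => by rw [h0 s w u v hadj, h0 w t u v hadj]; ring
  · -- antisymmetry
    intro s t u v
    dsimp only
    by_cases h : s = t
    · simp [h]
    · rw [if_neg h, if_neg h, ← Finset.sum_neg_distrib]
      exact Finset.sum_congr rfl fun w _ => by rw [ha s w u v, ha w t u v]; ring
  · -- conservation
    intro s t x hxs hxt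
    dsimp only
    by_cases h : s = t
    · simp [h]
    · simp only [if_neg h]
      rw [Finset.sum_comm]
      have hinner : ∀ w, ∑ y, (D' s t / A s * f s w x y + D' s t / A t * f w t x y)
          = D' s t / A s * (if w = x then -(A s * A x / S) else 0)
            + D' s t / A t * (if w = x then A x * A t / S else 0) := by
        intro w
        rw [Finset.sum_add_distrib, ← Finset.mul_sum, ← Finset.mul_sum,
          hA1 s w x hxs, hA2 w t x hxt]
      rw [Finset.sum_congr rfl fun w _ => hinner w]
      simp only [mul_ite, mul_zero, Finset.sum_add_distrib, Finset.sum_ite_eq' univ x,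
        Finset.mem_univ, if_pos]
      by_cases hAs : A s = 0
      · simp [hzero s t h hAs]
      · by_cases hAt : A t = 0
        · have : D' s t = 0 := by rw [hD'symm]; exact hzero t s (Ne.symm h) hAt
          simp [this]
        · field_simp
          ring
  · -- value
    intro s t hst
    dsimp only
    simp only [if_neg hst]
    rw [Finset.sum_comm]
    have hinner : ∀ w, ∑ y, (D' s t / A s * f s w s y + D' s t / A t * f w t s y)
        = D' s t / A s * (if w = s then 0 else A s * A w / S)
          + D' s t / A t * (if w = s then A s * A t / S else 0) := by
      intro w
      rw [Finset.sum_add_distrib, ← Finset.mul_sum, ← Finset.mul_sum,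
        hA3 s w, hA2 w t s hst]
    rw [Finset.sum_congr rfl fun w _ => hinner w]
    rw [Finset.sum_add_distrib]
    have hpart1 : ∑ w, D' s t / A s * (if w = s then 0 else A s * A w / S)
        = D' s t / A s * (A s * (S - A s) / S) := by
      rw [← Finset.mul_sum]
      congr 1
      have := sum_ite_ne_aux s (fun w => A s * A w / S)
      rw [this]
      have herase : ∑ w ∈ univ.erase s, A w = S - A s := by
        have := Finset.sum_erase_add univ A (Finset.mem_univ s)
        linarith
      rw [← Finset.sum_div, ← Finset.mul_sum, herase]
    have hpart2 : ∑ w, D' s t / A t * (if w = s then A s * A t / S else 0)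
        = D' s t / A t * (A s * A t / S) := by
      simp [Finset.sum_ite_eq' univ s]
    rw [hpart1, hpart2]
    by_cases hAs : A s = 0
    · simp [hzero s t hst hAs, hAs]
    · by_cases hAt : A t = 0
      · have hD : D' s t = 0 := by rw [hD'symm]; exact hzero t s (Ne.symm hst) hAt
        simp [hD]
      · field_simp
        ring
  · -- congestion
    intro u v hadj
    dsimp only
    have hcap1 : ∑ s, ∑ w, |f s w u v| ≤ 1 / φ := hcap u v hadj
    have hcap2 : ∑ t, ∑ w, |f w t u v| ≤ 1 / φ := by
      rw [Finset.sum_comm]; exact hcap u v hadj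
    set F1 : V → ℝ := fun s => ∑ w, |f s w u v| with hF1
    set F2 : V → ℝ := fun t => ∑ w, |f w t u v| with hF2
    have hF1nn : ∀ s, 0 ≤ F1 s := fun s => Finset.sum_nonneg fun w _ => abs_nonneg _
    have hF2nn : ∀ t, 0 ≤ F2 t := fun t => Finset.sum_nonneg fun w _ => abs_nonneg _
    have hbound : ∀ s t, |if s = t then (0:ℝ) else
        ∑ w, (D' s t / A s * f s w u v + D' s t / A t * f w t u v)|
        ≤ if s = t then 0 else D' s t / A s * F1 s + D' s t / A t * F2 t := by
      intro s t
      by_cases h : s = t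
      · simp [h]
      · simp only [if_neg h]
        calc |∑ w, (D' s t / A s * f s w u v + D' s t / A t * f w t u v)|
            ≤ ∑ w, |D' s t / A s * f s w u v + D' s t / A t * f w t u v| :=
              Finset.abs_sum_le_sum_abs _ _
          _ ≤ ∑ w, (D' s t / A s * |f s w u v| + D' s t / A t * |f w t u v|) := by
              refine Finset.sum_le_sum fun w _ => ?_
              calc |D' s t / A s * f s w u v + D' s t / A t * f w t u v|
                  ≤ |D' s t / A s * f s w u v| + |D' s t / A t * f w t u v| := abs_add_le _ _
                _ = D' s t / A s * |f s w u v| + D' s t / A t * |f w t u v| := by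
                    rw [abs_mul, abs_mul,
                      abs_of_nonneg (div_nonneg (hD'nonneg s t) (hA s)),
                      abs_of_nonneg (div_nonneg (hD'nonneg s t) (hA t))]
          _ = D' s t / A s * F1 s + D' s t / A t * F2 t := by
              rw [Finset.sum_add_distrib, ← Finset.mul_sum, ← Finset.mul_sum]
    have hfrac1 : ∀ s, ∑ t ∈ univ.erase s, D' s t / A s ≤ 1 := by
      intro s
      rw [← Finset.sum_div]
      by_cases hAs : A s = 0
      · rw [hAs, div_zero]; norm_num
      · rw [div_le_one (lt_of_le_of_ne (hA s) (Ne.symm hAs))]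
        exact hresp s
    have hfrac2 : ∀ t, ∑ s ∈ univ.erase t, D' s t / A t ≤ 1 := by
      intro t
      have : ∑ s ∈ univ.erase t, D' s t / A t = ∑ s ∈ univ.erase t, D' t s / A t :=
        Finset.sum_congr rfl fun s _ => by rw [hD'symm]
      rw [this]
      exact hfrac1 t
    calc ∑ s, ∑ t, |if s = t then (0:ℝ) else
            ∑ w, (D' s t / A s * f s w u v + D' s t / A t * f w t u v)|
        ≤ ∑ s, ∑ t, (if s = t then 0 else D' s t / A s * F1 s + D' s t / A t * F2 t) :=
          Finset.sum_le_sum fun s _ => Finset.sum_le_sum fun t _ => hbound s t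
      _ = (∑ s, ∑ t, (if s = t then 0 else D' s t / A s * F1 s))
          + ∑ s, ∑ t, (if s = t then 0 else D' s t / A t * F2 t) := by
          rw [← Finset.sum_add_distrib]
          refine Finset.sum_congr rfl fun s _ => ?_
          rw [← Finset.sum_add_distrib]
          refine Finset.sum_congr rfl fun t _ => ?_
          by_cases h : s = t <;> simp [h]
      _ ≤ (∑ s, F1 s) + ∑ t, F2 t := by
          have hpartA : ∑ s, ∑ t, (if s = t then (0:ℝ) else D' s t / A s * F1 s)
              ≤ ∑ s, F1 s := by
            refine Finset.sum_le_sum fun s _ => ?_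
            have heq : ∑ t, (if s = t then (0:ℝ) else D' s t / A s * F1 s)
                = (∑ t ∈ univ.erase s, D' s t / A s) * F1 s := by
              rw [Finset.sum_mul, ← sum_ite_ne_aux s (fun t => D' s t / A s * F1 s)]
              refine Finset.sum_congr rfl fun t _ => ?_
              by_cases h : s = t
              · subst h; simp
              · rw [if_neg h, if_neg (Ne.symm h)]
            rw [heq]
            calc (∑ t ∈ univ.erase s, D' s t / A s) * F1 s
                ≤ 1 * F1 s := mul_le_mul_of_nonneg_right (hfrac1 s) (hF1nn s)
              _ = F1 s := one_mul _
          have hpartB : ∑ s, ∑ t, (if s = t then (0:ℝ) else D' s t / A t * F2 t)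
              ≤ ∑ t, F2 t := by
            rw [Finset.sum_comm]
            refine Finset.sum_le_sum fun t _ => ?_
            have heq : ∑ s, (if s = t then (0:ℝ) else D' s t / A t * F2 t)
                = (∑ s ∈ univ.erase t, D' s t / A t) * F2 t := by
              rw [Finset.sum_mul, ← sum_ite_ne_aux t (fun s => D' s t / A t * F2 t)]
            rw [heq]
            calc (∑ s ∈ univ.erase t, D' s t / A t) * F2 t
                ≤ 1 * F2 t := mul_le_mul_of_nonneg_right (hfrac2 t) (hF2nn t)
              _ = F2 t := one_mul _
          exact add_le_add hpartA hpartB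
      _ ≤ 1 / φ + 1 / φ := add_le_add hcap1 hcap2
      _ = 2 / φ := by ring
end

section
/- Suppose Σ_{u,v} D(u,v)·dist_ℓ(u,v) ≥ 1/φ, K has ℓ-diameter at most 1/(4φ|A|), and D is the A-product demand (so Σ_{u,v} D(u,v) ≤ |A|). Then Σ_u π(u)·A(u) ≥ 1/(4φ), where π(u) = dist_ℓ(u,K). -/
open Finset Metric

/-- Key step of the heavy-component analysis: if the `A`-product demand has total
`ℓ`-distance cost at least `1/φ` and `K` has `ℓ`-diameter at most `1/(4φ|A|)`, then
`∑_u π(u)·A(u) ≥ 1/(4φ)` where `π u = dist_ℓ(u, K)`. -/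
theorem heavy_case_distance_mass_bound
    {V : Type*} [Fintype V] [PseudoMetricSpace V]
    (A : V → ℝ) (hA : ∀ v, 0 ≤ A v) (hApos : 0 < ∑ v, A v)
    (φ : ℝ) (hφ : 0 < φ)
    (K : Finset V) (hKne : K.Nonempty)
    (hdiam : ∀ u ∈ K, ∀ v ∈ K, dist u v ≤ 1 / (4 * φ * ∑ x, A x))
    (hflow : 1 / φ ≤ ∑ u, ∑ v, (A u * A v / ∑ x, A x) * dist u v) :
    1 / (4 * φ) ≤ ∑ u, Metric.infDist u (↑K : Set V) * A u := by
  set S := ∑ x, A x with hS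
  set c : ℝ := 1 / (4 * φ * S) with hc
  set π : V → ℝ := fun u => Metric.infDist u (↑K : Set V) with hπ
  set T := ∑ u, π u * A u with hT
  have hSne : S ≠ 0 := ne_of_gt hApos
  have hKc : IsCompact (↑K : Set V) := K.finite_toSet.isCompact
  have hKne' : (↑K : Set V).Nonempty := by exact_mod_cast hKne
  have hpt : ∀ u v : V, dist u v ≤ π u + c + π v := by
    intro u v
    obtain ⟨k, hk, hku⟩ := hKc.exists_infDist_eq_dist hKne' u
    obtain ⟨k', hk', hkv⟩ := hKc.exists_infDist_eq_dist hKne' v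
    have h1 : dist u v ≤ dist u k + dist k k' + dist k' v := dist_triangle4 u k k' v
    have h2 : dist k k' ≤ c := hdiam k hk k' hk'
    have h3 : π u = dist u k := hku
    have h4 : π v = dist v k' := hkv
    rw [h3, h4, dist_comm v k']
    linarith
  have hbound : ∑ u, ∑ v, (A u * A v / S) * dist u v
      ≤ ∑ u, ∑ v, (A u * A v / S) * (π u + c + π v) := by
    refine Finset.sum_le_sum fun u _ => Finset.sum_le_sum fun v _ => ?_
    have hD : 0 ≤ A u * A v / S := div_nonneg (mul_nonneg (hA u) (hA v)) hApos.le
    exact mul_le_mul_of_nonneg_left (hpt u v) hD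
  have hcomp : ∑ u, ∑ v, (A u * A v / S) * (π u + c + π v) = 2 * T + c * S := by
    have hinner : ∀ u : V, ∑ v, (A u * A v / S) * (π u + c + π v)
        = A u * (π u + c) + (A u / S) * ∑ v, π v * A v := by
      intro u
      have h0 : ∀ v : V, A u * A v / S * (π u + c + π v)
          = (A u / S) * (A v * (π u + c) + π v * A v) := fun v => by ring
      rw [Finset.sum_congr rfl fun v _ => h0 v, ← Finset.mul_sum,
        Finset.sum_add_distrib, ← Finset.sum_mul, ← hS]
      field_simp
    rw [Finset.sum_congr rfl fun u _ => hinner u, Finset.sum_add_distrib,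
      ← Finset.sum_mul, ← Finset.sum_div]
    rw [← hS, ← hT]
    have h1 : ∀ u : V, A u * (π u + c) = π u * A u + A u * c := fun u => by ring
    have : ∑ u, A u * (π u + c) = T + S * c := by
      rw [Finset.sum_congr rfl fun u _ => h1 u, Finset.sum_add_distrib,
        ← Finset.sum_mul, ← hT, ← hS, mul_comm S c]
    rw [this]
    field_simp
    ring
  have hcS : c * S = 1 / (4 * φ) := by
    rw [hc]
    field_simp
  have hmain : 1 / φ ≤ 2 * T + 1 / (4 * φ) := by
    rw [← hcS]
    exact le_trans hflow (le_of_le_of_eq hbound hcomp)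
  have h1 : 1 / φ = 4 * (1 / (4 * φ)) := by field_simp
  have h2 : 0 < 1 / (4 * φ) := by positivity
  linarith
end

section
/- Under the hypotheses that Σ_e ℓ_e ≤ 1, Σ_{u,v} D(u,v)·dist_ℓ(u,v) ≥ 1/φ, A(K) ≥ |A|/3, and diam_ℓ(K) ≤ 1/(4φ|A|) with D the A-product demand, the sweep cut over the ordering of V by decreasing π(v) = dist_ℓ(v,K) yields some k with |δ(S_k)|/D(S_k, V∖S_k) ≤ 12φ, and since D respects A this gives |δ(S_k)| ≤ 12φ·min{A(S_k), A(V∖S_k)}. -/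
open Finset Metric

private lemma sweep_tele (g : ℕ → ℝ) (a b : ℕ) (hab : a ≤ b) :
    ∑ k ∈ Finset.Ioc a b, (g (k-1) - g k) = g a - g b := by
  induction b, hab using Nat.le_induction with
  | base => simp
  | succ b hab ih =>
      rw [Finset.sum_Ioc_succ_top (by omega), ih, Nat.add_sub_cancel]
      ring

/-- Heavy-component sweep cut (Lemma 4.1): under the spreading-metric hypotheses
(`∑_e ℓ_e ≤ 1`, product-demand distance cost at least `1/φ`, `A(K) ≥ |A|/3`,
`diam_ℓ(K) ≤ 1/(4φ|A|)`), sweeping vertices in order of decreasing `π(v) = dist_ℓ(v,K)`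
produces some prefix `S_k` (with `1 ≤ k < n`) whose cut satisfies
`|δ(S_k)| ≤ 12φ·D(S_k, V∖S_k) ≤ 12φ·min{A(S_k), A(V∖S_k)}`. -/
theorem heavy_component_sweep_cut
    {V : Type*} [Fintype V] [DecidableEq V] [PseudoMetricSpace V]
    (A : V → ℝ) (hA : ∀ v, 0 ≤ A v) (hApos : 0 < ∑ v, A v)
    (φ : ℝ) (hφ : 0 < φ)
    (E : Finset (V × V)) (hloop : ∀ p ∈ E, p.1 ≠ p.2)
    (ℓ : V × V → ℝ) (hℓnn : ∀ e ∈ E, 0 ≤ ℓ e)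
    (hmetric : ∀ e ∈ E, dist e.1 e.2 ≤ ℓ e)
    (hsum : ∑ e ∈ E, ℓ e ≤ 1)
    (K : Finset V) (hKne : K.Nonempty)
    (hKmass : (∑ v, A v) / 3 ≤ ∑ v ∈ K, A v)
    (hdiam : ∀ u ∈ K, ∀ v ∈ K, dist u v ≤ 1 / (4 * φ * ∑ x, A x))
    (hflow : 1 / φ ≤ ∑ u, ∑ v, (A u * A v / ∑ x, A x) * dist u v)
    (n : ℕ) (hn : n = Fintype.card V) (e : Fin n ≃ V)
    (hsorted : ∀ i j : Fin n, i ≤ j →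
      Metric.infDist (e j) (↑K : Set V) ≤ Metric.infDist (e i) (↑K : Set V)) :
    ∃ k : ℕ, 1 ≤ k ∧ k < n ∧
      ∀ S : Finset V, S = (univ.filter (fun i : Fin n => (i : ℕ) < k)).image e →
        ((E.filter (fun p => (p.1 ∈ S ∧ p.2 ∉ S) ∨ (p.1 ∉ S ∧ p.2 ∈ S))).card : ℝ)
            ≤ 12 * φ * (∑ s ∈ S, ∑ t ∈ Sᶜ, A s * A t / ∑ x, A x) ∧
        ((E.filter (fun p => (p.1 ∈ S ∧ p.2 ∉ S) ∨ (p.1 ∉ S ∧ p.2 ∈ S))).card : ℝ)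
            ≤ 12 * φ * min (∑ v ∈ S, A v) (∑ v ∈ Sᶜ, A v) := by
  classical
  set σ : ℝ := ∑ x, A x with hσdef
  have hσpos : 0 < σ := hApos
  have hσne : σ ≠ 0 := ne_of_gt hσpos
  set π : V → ℝ := fun v => Metric.infDist v (↑K : Set V) with hπdef
  have hπnn : ∀ v, 0 ≤ π v := fun v => Metric.infDist_nonneg
  have hπK : ∀ v ∈ K, π v = 0 := fun v hv => Metric.infDist_zero_of_mem (by exact_mod_cast hv)
  have hπlip : ∀ u v : V, |π u - π v| ≤ dist u v := by
    intro u v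
    have h1 : π u ≤ π v + dist u v := Metric.infDist_le_infDist_add_dist
    have h2 : π v ≤ π u + dist v u := Metric.infDist_le_infDist_add_dist
    rw [dist_comm v u] at h2
    rw [abs_sub_le_iff]
    exact ⟨by linarith, by linarith⟩
  -- Step A : lower bound on the weighted sum of π
  have hattain : ∀ u : V, ∃ z ∈ K, π u = dist u z := by
    intro u
    obtain ⟨z, hz, hze⟩ := (K.finite_toSet.isCompact).exists_infDist_eq_dist
      (by exact_mod_cast hKne) u
    exact ⟨z, by exact_mod_cast hz, hze⟩
  have hdistbound : ∀ u v : V, dist u v ≤ π u + π v + 1/(4*φ*σ) := by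
    intro u v
    obtain ⟨za, hza, hzae⟩ := hattain u
    obtain ⟨zb, hzb, hzbe⟩ := hattain v
    have h1 : dist u v ≤ dist u za + dist za zb + dist zb v := dist_triangle4 u za zb v
    have h2 : dist za zb ≤ 1/(4*φ*σ) := hdiam za hza zb hzb
    have h3 : dist zb v = dist v zb := dist_comm zb v
    linarith [hzae, hzbe]
  have hL : 3/(8*φ) ≤ ∑ v, A v * π v := by
    have hub : ∑ u, ∑ v, (A u * A v / σ) * dist u v
        ≤ 2 * (∑ v, A v * π v) + 1/(4*φ) := by
      have step1 : ∑ u, ∑ v, (A u * A v / σ) * dist u v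
          ≤ ∑ u, ∑ v, (A u * A v / σ) * (π u + π v + 1/(4*φ*σ)) := by
        refine Finset.sum_le_sum fun u _ => Finset.sum_le_sum fun v _ => ?_
        exact mul_le_mul_of_nonneg_left (hdistbound u v)
          (div_nonneg (mul_nonneg (hA u) (hA v)) (le_of_lt hσpos))
      have inner : ∀ u : V, ∑ v, (A u * A v / σ) * (π u + π v + 1/(4*φ*σ))
          = (σ/σ) * (A u * π u) + ((∑ v, A v * π v)/σ + σ * (1/(4*φ*σ)) / σ) * A u := by
        intro u
        have h : ∀ v : V, (A u * A v / σ) * (π u + π v + 1/(4*φ*σ))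
            = (A u * π u / σ) * A v + (A u / σ) * (A v * π v)
              + (A u * (1/(4*φ*σ)) / σ) * A v := by intro v; ring
        simp only [h, Finset.sum_add_distrib, ← Finset.mul_sum, ← hσdef]
        ring
      have step2 : ∑ u, ∑ v, (A u * A v / σ) * (π u + π v + 1/(4*φ*σ))
          = (σ/σ) * (∑ u, A u * π u)
            + ((∑ v, A v * π v)/σ + σ * (1/(4*φ*σ)) / σ) * σ := by
        simp only [inner, Finset.sum_add_distrib, ← Finset.mul_sum, ← hσdef]
      have hc : σ * (1/(4*φ*σ)) = 1/(4*φ) := by field_simp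
      have hss : σ/σ = 1 := div_self hσne
      calc ∑ u, ∑ v, (A u * A v / σ) * dist u v
          ≤ ∑ u, ∑ v, (A u * A v / σ) * (π u + π v + 1/(4*φ*σ)) := step1
        _ = (σ/σ) * (∑ u, A u * π u)
            + ((∑ v, A v * π v)/σ + σ * (1/(4*φ*σ)) / σ) * σ := step2
        _ = 2 * (∑ v, A v * π v) + 1/(4*φ) := by
            rw [hss, hc]
            field_simp
            ring
    have h1 : 1/φ ≤ 2 * (∑ v, A v * π v) + 1/(4*φ) := le_trans hflow hub
    have h2 : 1/(4*φ) = (1/φ)/4 := by ring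
    have h3 : 3/(8*φ) = (3/8)*(1/φ) := by ring
    rw [h3]; rw [h2] at h1; linarith
  -- basic setup for the sweep
  have hn1 : 1 ≤ n := by
    obtain ⟨v0, _⟩ := hKne
    have : Nonempty V := ⟨v0⟩
    rw [hn]; exact Fintype.card_pos
  set g : ℕ → ℝ := fun k => if h : k < n then π (e ⟨k, h⟩) else 0 with hgdef
  have hg : ∀ (k) (h : k < n), g k = π (e ⟨k, h⟩) := by
    intro k h; simp only [hgdef, dif_pos h]
  have hgnn : ∀ k, 0 ≤ g k := by
    intro k; simp only [hgdef]
    split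
    · exact hπnn _
    · exact le_refl 0
  have hganti : ∀ i j, i ≤ j → g j ≤ g i := by
    intro i j hij
    by_cases hj : j < n
    · have hi : i < n := lt_of_le_of_lt hij hj
      rw [hg i hi, hg j hj]
      simp only [hπdef]
      exact hsorted ⟨i, hi⟩ ⟨j, hj⟩ (by exact hij)
    · have h0 : g j = 0 := by simp only [hgdef, dif_neg hj]
      rw [h0]; exact hgnn i
  have hgpos : ∀ v : V, g ((e.symm v : ℕ)) = π v := by
    intro v
    rw [hg _ (e.symm v).isLt]
    congr 1
    simp [Fin.eta]
  have hlast : g (n-1) = 0 := by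
    obtain ⟨v0, hv0⟩ := hKne
    have hlt := (e.symm v0).isLt
    have h1 : g (n-1) ≤ g ((e.symm v0 : ℕ)) := hganti _ _ (by omega)
    rw [hgpos v0, hπK v0 hv0] at h1
    exact le_antisymm h1 (hgnn _)
  set a : ℕ → ℝ := fun i => if h : i < n then A (e ⟨i, h⟩) else 0 with hadef
  have haa : ∀ (i) (h : i < n), a i = A (e ⟨i, h⟩) := by
    intro i h; simp only [hadef, dif_pos h]
  set w : ℕ → ℝ := fun k => g (k-1) - g k with hwdef
  have hwnn : ∀ k, 0 ≤ w k := fun k => sub_nonneg.mpr (hganti (k-1) k (Nat.sub_le k 1))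
  set Sk : ℕ → Finset V := fun k => (univ.filter (fun i : Fin n => (i : ℕ) < k)).image e
    with hSkdef
  have hSmem : ∀ k (v : V), v ∈ Sk k ↔ ((e.symm v : ℕ) < k) := by
    intro k v
    simp only [hSkdef, Finset.mem_image, Finset.mem_filter, Finset.mem_univ, true_and]
    constructor
    · rintro ⟨i, hi, rfl⟩; simpa using hi
    · intro h; exact ⟨e.symm v, h, e.apply_symm_apply v⟩
  have hfil : ∀ k, k ≤ n → (range n).filter (fun i => i < k) = range k := by
    intro k hk; ext i; simp only [Finset.mem_filter, Finset.mem_range]; omega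
  have hSA : ∀ k, k ≤ n → ∑ v ∈ Sk k, A v = ∑ i ∈ range k, a i := by
    intro k hk
    simp only [hSkdef]
    rw [Finset.sum_image (fun i _ j _ h => e.injective h), Finset.sum_filter]
    have h1 : ∀ i : Fin n, (if (i : ℕ) < k then A (e i) else 0)
        = (fun m => if m < k then a m else 0) (i : ℕ) := by
      intro i
      simp only [haa _ i.isLt, Fin.eta]
    rw [Finset.sum_congr rfl (fun i _ => h1 i),
      Fin.sum_univ_eq_sum_range (fun m => if m < k then a m else 0) n,
      ← Finset.sum_filter, hfil k hk]
  have hSAnn : ∀ k, 0 ≤ ∑ v ∈ Sk k, A v := fun k => Finset.sum_nonneg fun v _ => hA v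
  have hSAcnn : ∀ k, 0 ≤ ∑ v ∈ (Sk k)ᶜ, A v := fun k => Finset.sum_nonneg fun v _ => hA v
  have hcompl : ∀ k : ℕ, (∑ v ∈ Sk k, A v) + (∑ v ∈ (Sk k)ᶜ, A v) = σ := by
    intro k
    rw [hσdef]
    exact Finset.sum_add_sum_compl (Sk k) A
  -- demand across the cut
  set Dk : ℕ → ℝ := fun k => ∑ s ∈ Sk k, ∑ t ∈ (Sk k)ᶜ, A s * A t / σ with hDdef
  have hDk : ∀ k, Dk k = (∑ s ∈ Sk k, A s) * (∑ t ∈ (Sk k)ᶜ, A t) / σ := by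
    intro k
    simp only [hDdef]
    rw [Finset.sum_mul_sum, Finset.sum_div]
    exact Finset.sum_congr rfl fun s _ => by rw [Finset.sum_div]
  have hKsub : ∀ k, g k < g (k-1) → ∀ v ∈ K, v ∉ Sk k := by
    intro k hwk v hv hvS
    rw [hSmem] at hvS
    have h1 : g (k-1) ≤ g ((e.symm v : ℕ)) := hganti _ _ (by omega)
    rw [hgpos v, hπK v hv] at h1
    have h2 : 0 ≤ g k := hgnn k
    linarith
  have hKmassc : ∀ k, g k < g (k-1) → σ/3 ≤ ∑ v ∈ (Sk k)ᶜ, A v := by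
    intro k hk
    calc σ/3 ≤ ∑ v ∈ K, A v := hKmass
      _ ≤ ∑ v ∈ (Sk k)ᶜ, A v :=
        Finset.sum_le_sum_of_subset_of_nonneg
          (fun v hv => Finset.mem_compl.mpr (hKsub k hk v hv))
          (fun v _ _ => hA v)
  set cut : ℕ → ℝ := fun k =>
    ((E.filter (fun p => (p.1 ∈ Sk k ∧ p.2 ∉ Sk k) ∨ (p.1 ∉ Sk k ∧ p.2 ∈ Sk k))).card : ℝ)
    with hcutdef
  have hcutsum : ∀ k, cut k = ∑ p ∈ E,
      (if ((p.1 ∈ Sk k ∧ p.2 ∉ Sk k) ∨ (p.1 ∉ Sk k ∧ p.2 ∈ Sk k)) then (1:ℝ) else 0) := by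
    intro k
    simp only [hcutdef]
    rw [Finset.card_filter]
    push_cast
    exact Finset.sum_congr rfl fun p _ => by split_ifs <;> rfl

  -- Length bound on the sweep
  have hT : ∑ k ∈ Ico 1 n, w k * cut k ≤ 1 := by
    have step1 : ∀ p ∈ E, ∑ k ∈ Ico 1 n,
        (if ((p.1 ∈ Sk k ∧ p.2 ∉ Sk k) ∨ (p.1 ∉ Sk k ∧ p.2 ∈ Sk k)) then w k else 0)
        ≤ ℓ p := by
      intro p hp
      have hxn : ((e.symm p.1 : Fin n) : ℕ) < n := (e.symm p.1).isLt
      have hyn : ((e.symm p.2 : Fin n) : ℕ) < n := (e.symm p.2).isLt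
      set x : ℕ := ((e.symm p.1 : Fin n) : ℕ) with hxdef
      set y : ℕ := ((e.symm p.2 : Fin n) : ℕ) with hydef
      have hcrossiff : ∀ k, ((p.1 ∈ Sk k ∧ p.2 ∉ Sk k) ∨ (p.1 ∉ Sk k ∧ p.2 ∈ Sk k))
          ↔ (min x y < k ∧ k ≤ max x y) := by
        intro k; rw [hSmem, hSmem]; omega
      calc ∑ k ∈ Ico 1 n,
            (if ((p.1 ∈ Sk k ∧ p.2 ∉ Sk k) ∨ (p.1 ∉ Sk k ∧ p.2 ∈ Sk k)) then w k else 0)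
          = ∑ k ∈ Ico 1 n, (if (min x y < k ∧ k ≤ max x y) then w k else 0) :=
            Finset.sum_congr rfl (fun k _ => if_congr (hcrossiff k) rfl rfl)
        _ = ∑ k ∈ Ioc (min x y) (max x y), w k := by
            rw [← Finset.sum_filter]
            congr 1
            ext k
            simp only [Finset.mem_filter, Finset.mem_Ico, Finset.mem_Ioc]
            omega
        _ = g (min x y) - g (max x y) := by
            simp only [hwdef]
            exact sweep_tele g _ _ (min_le_max)
        _ ≤ |π p.1 - π p.2| := by
            have h1 : g x = π p.1 := hgpos p.1
            have h2 : g y = π p.2 := hgpos p.2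
            rw [← h1, ← h2]
            rcases le_total x y with h | h
            · rw [min_eq_left h, max_eq_right h]; exact le_abs_self _
            · rw [min_eq_right h, max_eq_left h, abs_sub_comm]; exact le_abs_self _
        _ ≤ dist p.1 p.2 := hπlip p.1 p.2
        _ ≤ ℓ p := hmetric p hp
    calc ∑ k ∈ Ico 1 n, w k * cut k
        = ∑ p ∈ E, ∑ k ∈ Ico 1 n,
            (if ((p.1 ∈ Sk k ∧ p.2 ∉ Sk k) ∨ (p.1 ∉ Sk k ∧ p.2 ∈ Sk k)) then w k else 0) := by
          simp only [hcutsum, Finset.mul_sum, mul_ite, mul_one, mul_zero]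
          exact Finset.sum_comm
      _ ≤ ∑ p ∈ E, ℓ p := Finset.sum_le_sum step1
      _ ≤ 1 := hsum
  -- Demand lower bound on the sweep
  have hLrange : ∑ i ∈ range n, a i * g i = ∑ v, A v * π v := by
    rw [← Fin.sum_univ_eq_sum_range (fun i => a i * g i) n]
    rw [← Equiv.sum_comp e (fun v => A v * π v)]
    refine Finset.sum_congr rfl fun i _ => ?_
    rw [haa _ i.isLt, hg _ i.isLt]
  have hAbel : ∑ k ∈ Ico 1 n, w k * (∑ i ∈ range k, a i) = ∑ i ∈ range n, a i * g i := by
    calc ∑ k ∈ Ico 1 n, w k * (∑ i ∈ range k, a i)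
        = ∑ k ∈ Ico 1 n, ∑ i ∈ range n, (if i < k then w k * a i else 0) := by
          refine Finset.sum_congr rfl fun k hk => ?_
          rw [Finset.mem_Ico] at hk
          rw [Finset.mul_sum, ← hfil k (le_of_lt hk.2), Finset.sum_filter]
      _ = ∑ i ∈ range n, ∑ k ∈ Ico 1 n, (if i < k then w k * a i else 0) := Finset.sum_comm
      _ = ∑ i ∈ range n, a i * g i := by
          refine Finset.sum_congr rfl fun i hi => ?_
          rw [Finset.mem_range] at hi
          have h1 : ∑ k ∈ Ico 1 n, (if i < k then w k * a i else 0)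
              = ∑ k ∈ Ioc i (n-1), w k * a i := by
            rw [← Finset.sum_filter]
            congr 1
            ext k
            simp only [Finset.mem_filter, Finset.mem_Ico, Finset.mem_Ioc]
            omega
          rw [h1, ← Finset.sum_mul]
          have h2 : ∑ k ∈ Ioc i (n-1), w k = g i - g (n-1) := by
            simp only [hwdef]
            exact sweep_tele g i (n-1) (by omega)
          rw [h2, hlast]
          ring
  have hU : 1/(8*φ) ≤ ∑ k ∈ Ico 1 n, w k * Dk k := by
    have step : ∀ k ∈ Ico 1 n, w k * ((∑ i ∈ range k, a i)/3) ≤ w k * Dk k := by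
      intro k hk
      rw [Finset.mem_Ico] at hk
      rcases eq_or_lt_of_le (hganti (k-1) k (Nat.sub_le k 1)) with h | h
      · have hw0 : w k = 0 := by simp only [hwdef]; rw [← h]; ring
        rw [hw0]; simp
      · refine mul_le_mul_of_nonneg_left ?_ (hwnn k)
        rw [← hSA k (le_of_lt hk.2), hDk]
        have h1 : σ/3 ≤ ∑ v ∈ (Sk k)ᶜ, A v := hKmassc k h
        have h2 : 0 ≤ ∑ v ∈ Sk k, A v := hSAnn k
        rw [div_le_div_iff₀ (by norm_num) hσpos]
        nlinarith
    calc 1/(8*φ) = (3/(8*φ))/3 := by ring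
      _ ≤ (∑ v, A v * π v)/3 := by linarith
      _ = (∑ i ∈ range n, a i * g i)/3 := by rw [hLrange]
      _ = ∑ k ∈ Ico 1 n, w k * ((∑ i ∈ range k, a i)/3) := by
          rw [← hAbel, Finset.sum_div]
          exact Finset.sum_congr rfl fun k _ => by ring
      _ ≤ ∑ k ∈ Ico 1 n, w k * Dk k := Finset.sum_le_sum step
  -- existence of a good sweep cut
  have hex : ∃ k ∈ Ico 1 n, cut k ≤ 12 * φ * Dk k := by
    by_contra hcon
    push_neg at hcon
    have h1 : ∑ k ∈ Ico 1 n, w k * (12 * φ * Dk k) ≤ ∑ k ∈ Ico 1 n, w k * cut k :=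
      Finset.sum_le_sum fun k hk =>
        mul_le_mul_of_nonneg_left (le_of_lt (hcon k hk)) (hwnn k)
    have h2 : ∑ k ∈ Ico 1 n, w k * (12 * φ * Dk k)
        = 12 * φ * ∑ k ∈ Ico 1 n, w k * Dk k := by
      rw [Finset.mul_sum]
      exact Finset.sum_congr rfl fun k _ => by ring
    have h3 : (3:ℝ)/2 ≤ 12 * φ * ∑ k ∈ Ico 1 n, w k * Dk k := by
      calc (3:ℝ)/2 = 12 * φ * (1/(8*φ)) := by field_simp; ring
        _ ≤ _ := by
            refine mul_le_mul_of_nonneg_left hU (by positivity)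
    linarith
  obtain ⟨k, hk, hineq⟩ := hex
  rw [Finset.mem_Ico] at hk
  refine ⟨k, hk.1, hk.2, ?_⟩
  intro S hS
  have hSS : S = Sk k := by rw [hS, hSkdef]
  rw [hSS]
  have e1 : ((E.filter (fun p => (p.1 ∈ Sk k ∧ p.2 ∉ Sk k) ∨ (p.1 ∉ Sk k ∧ p.2 ∈ Sk k))).card : ℝ)
      = cut k := by rw [hcutdef]
  have e2 : (∑ s ∈ Sk k, ∑ t ∈ (Sk k)ᶜ, A s * A t / σ) = Dk k := by rw [hDdef]
  have hDmin : Dk k ≤ min (∑ v ∈ Sk k, A v) (∑ v ∈ (Sk k)ᶜ, A v) := by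
    rw [hDk]
    have h1 := hSAnn k
    have h2 := hSAcnn k
    have h3 := hcompl k
    refine le_min ?_ ?_
    · rw [div_le_iff₀ hσpos]; nlinarith
    · rw [div_le_iff₀ hσpos]; nlinarith
  constructor
  · rw [e1, e2]; exact hineq
  · rw [e1]
    calc cut k ≤ 12 * φ * Dk k := hineq
      _ ≤ 12 * φ * min (∑ v ∈ Sk k, A v) (∑ v ∈ (Sk k)ᶜ, A v) :=
          mul_le_mul_of_nonneg_left hDmin (by positivity)
end
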